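/- arXiv:1309.6528 — 2 statements merged into one kernel-verified Lean document; each statement's English description precedes it below -/
import Mathlib

section
/- If G is a finite group acting by isometries on a nondegenerate lattice Λ (with Λ^G nondegenerate), then the induced action of G on the discriminant group A_{Λ^G} = (Λ^G)*/Λ^G is trivial, and hence (via the canonical isomorphism for unimodular Λ) the induced action of G on A_{Λ_G} is trivial. -/
/-! Λ^G spans the fixed space of G, so G acts trivially on its dual. For Λ_G, `g - 1` is adjoint
to `g⁻¹ - 1`, which maps Λ into Λ_G; hence `g - 1` maps Λ_G^* into Λ^* = Λ, and its image is
orthogonal to every fixed vector. -/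

namespace LinearMap.BilinForm

section Isometry

variable {R M : Type*} [CommRing R] [AddCommGroup M] [Module R M] {B : LinearMap.BilinForm R M}

theorem apply_sub_self_left_eq_zero_of_isometry {f : M →ₗ[R] M}
    (hf : ∀ x y, B (f x) (f y) = B x y) {z : M} (hz : f z = z) (x : M) :
    B (f x - x) z = 0 := by
  rw [map_sub, LinearMap.sub_apply, ← hz, hf, hz, sub_self]

variable {G : Type*} [Group G] {ρ : G →* (M ≃ₗ[R] M)}

theorem apply_map_left_eq_apply_map_inv_right
    (hisom : ∀ g x y, B (ρ g x) (ρ g y) = B x y) (g : G) (x y : M) :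
    B (ρ g x) y = B x (ρ g⁻¹ y) := by
  have hcancel : ρ g (ρ g⁻¹ y) = y := by
    rw [← LinearEquiv.mul_apply, ← map_mul, mul_inv_cancel, map_one, LinearEquiv.coe_one, id_eq]
  rw [← hisom g x, hcancel]

end Isometry

theorem map_sub_self_mem_dualSubmodule {R S M G : Type*} [CommRing R] [Field S]
    [AddCommGroup M] [Algebra R S] [Module R M] [Module S M] [IsScalarTower R S M] [Group G]
    {B : LinearMap.BilinForm S M} {ρ : G →* (M ≃ₗ[S] M)}
    (hisom : ∀ g x y, B (ρ g x) (ρ g y) = B x y)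
    {Λ N : Submodule R M} {g : G} (hmove : ∀ y ∈ Λ, ρ g⁻¹ y - y ∈ N)
    {x : M} (hx : x ∈ B.dualSubmodule N) : ρ g x - x ∈ B.dualSubmodule Λ := by
  intro y hy
  rw [map_sub, LinearMap.sub_apply, apply_map_left_eq_apply_map_inv_right hisom, ← map_sub]
  exact hx _ (hmove y hy)

end LinearMap.BilinForm

theorem stmt6_general (V : Type*) [AddCommGroup V] [Module ℚ V]
    (B : LinearMap.BilinForm ℚ V)
    (Λ : Submodule ℤ V)
    (huni : B.dualSubmodule Λ = Λ)
    (G : Type*) [Group G]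
    (ρ : G →* (V ≃ₗ[ℚ] V))
    (hisom : ∀ g x y, B (ρ g x) (ρ g y) = B x y)
    (hΛ : ∀ g, ∀ x ∈ Λ, ρ g x ∈ Λ)
    -- the invariant lattice Λ^G
    (Lfix : Submodule ℤ V)
    (hLfix : ∀ x, x ∈ Lfix ↔ x ∈ Λ ∧ ∀ g, ρ g x = x)
    -- the coinvariant lattice Λ_G = (Λ^G)^⊥
    (Lco : Submodule ℤ V)
    (hLco : ∀ x, x ∈ Lco ↔ x ∈ Λ ∧ ∀ y ∈ Lfix, B x y = 0) :
    (∀ g : G, ∀ x ∈ B.dualSubmodule Lfix ⊓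
        Submodule.restrictScalars ℤ (Submodule.span ℚ (Lfix : Set V)),
      ρ g x - x ∈ Lfix) ∧
    (∀ g : G, ∀ x ∈ B.dualSubmodule Lco ⊓
        Submodule.restrictScalars ℤ (Submodule.span ℚ (Lco : Set V)),
      ρ g x - x ∈ Lco) := by
  have hfixed (g : G) {z : V} (hz : z ∈ Lfix) : ρ g z = z := ((hLfix z).1 hz).2 g
  have horth (g : G) (x : V) : ∀ z ∈ Lfix, B (ρ g x - x) z = 0 := fun z hz =>
    LinearMap.BilinForm.apply_sub_self_left_eq_zero_of_isometry (f := (ρ g : V →ₗ[ℚ] V))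
      (hisom g) (hfixed g hz) x
  refine ⟨fun g x hx => ?_, fun g x hx => ?_⟩
  · have hx_fixed : ρ g x = x :=
      LinearMap.eqOn_span (f := (ρ g : V →ₗ[ℚ] V)) (g := LinearMap.id) (fun _ hz => hfixed g hz) hx.2
    rw [hx_fixed, sub_self]
    exact Lfix.zero_mem
  · have hmove : ∀ y ∈ Λ, ρ g⁻¹ y - y ∈ Lco := fun y hy =>
      (hLco _).2 ⟨Λ.sub_mem (hΛ g⁻¹ y hy) hy, horth g⁻¹ y⟩
    refine (hLco _).2 ⟨?_, horth g x⟩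
    exact huni ▸ LinearMap.BilinForm.map_sub_self_mem_dualSubmodule hisom hmove hx.1

/-- If `G` is a finite group acting by isometries on a unimodular lattice
`Λ` (with `Λ^G` nondegenerate), then the induced action of `G` on the discriminant group
`A_{Λ^G} = (Λ^G)^*/Λ^G` is trivial, and hence the induced action of `G` on `A_{Λ_G}` is
trivial; i.e. for every `g ∈ G` and every `x` in the dual lattice `M^* = (dual M) ∩ (ℚ-span M)`
of `M = Λ^G` (resp. `M = Λ_G`) one has `g·x − x ∈ M`. -/
theorem stmt6 (V : Type*) [AddCommGroup V] [Module ℚ V] [FiniteDimensional ℚ V]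
    (B : LinearMap.BilinForm ℚ V)
    (hsymm : ∀ x y, B x y = B y x)
    (hnondeg : ∀ x : V, (∀ y, B x y = 0) → x = 0)
    (Λ : Submodule ℤ V) (hfg : Λ.FG)
    (hfull : Submodule.span ℚ (Λ : Set V) = ⊤)
    (hint : Λ ≤ B.dualSubmodule Λ)
    (huni : B.dualSubmodule Λ = Λ)
    (G : Type*) [Group G] [Finite G]
    (ρ : G →* (V ≃ₗ[ℚ] V))
    (hisom : ∀ g x y, B (ρ g x) (ρ g y) = B x y)
    (hΛ : ∀ g, ∀ x ∈ Λ, ρ g x ∈ Λ)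
    -- the invariant lattice Λ^G
    (Lfix : Submodule ℤ V)
    (hLfix : ∀ x, x ∈ Lfix ↔ x ∈ Λ ∧ ∀ g, ρ g x = x)
    -- Λ^G is nondegenerate
    (hfixnondeg : ∀ x ∈ Submodule.span ℚ (Lfix : Set V),
      (∀ y ∈ Submodule.span ℚ (Lfix : Set V), B x y = 0) → x = 0)
    -- the coinvariant lattice Λ_G = (Λ^G)^⊥
    (Lco : Submodule ℤ V)
    (hLco : ∀ x, x ∈ Lco ↔ x ∈ Λ ∧ ∀ y ∈ Lfix, B x y = 0) :
    (∀ g : G, ∀ x ∈ B.dualSubmodule Lfix ⊓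
        Submodule.restrictScalars ℤ (Submodule.span ℚ (Lfix : Set V)),
      ρ g x - x ∈ Lfix) ∧
    (∀ g : G, ∀ x ∈ B.dualSubmodule Lco ⊓
        Submodule.restrictScalars ℤ (Submodule.span ℚ (Lco : Set V)),
      ρ g x - x ∈ Lco) :=
  stmt6_general V B Λ huni G ρ hisom hΛ Lfix hLfix Lco hLco
end

section
/- Let Λ be a unimodular lattice, M ⊆ Λ a primitive nondegenerate sublattice with orthogonal complement M^⊥, and G a finite group acting on M by isometries such that the induced action on the discriminant group A_M is trivial. Then the action of G extends to an action on Λ by isometries which restricts to the identity on M^⊥. -/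
/-!
Since `B` is nondegenerate on `W = ℚ ⊗ M`, the space splits orthogonally as `V = W ⊕ W^⊥`, and
each `ρ g` extends to an isometry `τ g` of `V` acting as the identity on `W^⊥`. For `x ∈ Λ` with
`W`-component `x_W`, integrality of `Λ` gives `B x_W m = B x m ∈ ℤ` for `m ∈ M`, so `x_W` lies in
the dual lattice `M^∨`; triviality of the action on `A_M = M^∨ / M` then yields
`τ g x - x = ρ g x_W - x_W ∈ M ⊆ Λ`.
-/

section ExtendById

variable {R E : Type*} [Ring R] [AddCommGroup E] [Module R E] {p q : Submodule R E}

namespace LinearMap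

noncomputable def extendByIdOfIsCompl (h : IsCompl p q) : Module.End R p →* Module.End R E where
  toFun f := ofIsCompl h (p.subtype ∘ₗ f) q.subtype
  map_one' := ofIsCompl_eq h (fun _ => rfl) (fun _ => rfl)
  map_mul' f g := ofIsCompl_eq h (fun u => by simp) (fun v => by simp)

end LinearMap

namespace LinearEquiv

open LinearMap.GeneralLinearGroup in
noncomputable def extendByIdOfIsCompl (h : IsCompl p q) : (p ≃ₗ[R] p) →* (E ≃ₗ[R] E) :=
  (generalLinearEquiv R E).toMonoidHom.comp <|
    (Units.map (LinearMap.extendByIdOfIsCompl h)).comp (generalLinearEquiv R p).symm.toMonoidHom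

variable (h : IsCompl p q) (e : p ≃ₗ[R] p)

theorem extendByIdOfIsCompl_apply (x : E) :
    extendByIdOfIsCompl h e x = (e (p.projectionOnto q h x) : E) + q.projectionOnto p h.symm x := by
  change LinearMap.ofIsCompl h (p.subtype ∘ₗ e.toLinearMap) q.subtype x = _
  simp [LinearMap.ofIsCompl_eq_add]

@[simp]
theorem extendByIdOfIsCompl_apply_left (u : p) : extendByIdOfIsCompl h e u = e u := by
  simp [extendByIdOfIsCompl_apply]

@[simp]
theorem extendByIdOfIsCompl_apply_right (v : q) : extendByIdOfIsCompl h e v = v := by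
  simp [extendByIdOfIsCompl_apply]

theorem extendByIdOfIsCompl_apply_sub_self (x : E) :
    extendByIdOfIsCompl h e x - x =
      (e (p.projectionOnto q h x) : E) - p.projectionOnto q h x := by
  rw [extendByIdOfIsCompl_apply]
  conv_lhs => arg 2; rw [← Submodule.projection_add_projection_eq_self h x]
  simp only [Submodule.projection_apply]
  abel

end LinearEquiv

end ExtendById

namespace LinearMap.BilinForm

section Orthogonal

variable {R M : Type*} [CommRing R] [AddCommGroup M] [Module R M] {B : LinearMap.BilinForm R M}
  {W : Submodule R M}

theorem apply_add_add_of_mem_orthogonal (hB : B.IsRefl) {w w' v v' : M} (hw : w ∈ W)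
    (hw' : w' ∈ W) (hv : v ∈ B.orthogonal W) (hv' : v' ∈ B.orthogonal W) :
    B (w + v) (w' + v') = B w w' + B v v' := by
  have hwv' : B w v' = 0 := hv' w hw
  have hvw' : B v w' = 0 := hB _ _ (hv w' hw')
  simp only [map_add, LinearMap.add_apply, hwv', hvw', add_zero, zero_add]

theorem extendByIdOfIsCompl_isometry (hB : B.IsRefl) (h : IsCompl W (B.orthogonal W))
    (e : W ≃ₗ[R] W) (he : ∀ x y : W, B (e x) (e y) = B x y) (x y : M) :
    B (LinearEquiv.extendByIdOfIsCompl h e x) (LinearEquiv.extendByIdOfIsCompl h e y) = B x y := by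
  conv_rhs => rw [← Submodule.projection_add_projection_eq_self h x,
    ← Submodule.projection_add_projection_eq_self h y]
  simp only [LinearEquiv.extendByIdOfIsCompl_apply, Submodule.projection_apply]
  rw [apply_add_add_of_mem_orthogonal hB (e _).2 (e _).2 (Subtype.prop _) (Subtype.prop _),
    apply_add_add_of_mem_orthogonal hB (Subtype.prop _) (Subtype.prop _) (Subtype.prop _)
      (Subtype.prop _), he]

end Orthogonal

theorem isCompl_orthogonal_of_forall_apply_eq_zero {K V : Type*} [Field K] [AddCommGroup V]
    [Module K V] [FiniteDimensional K V] {B : LinearMap.BilinForm K V} {W : Submodule K V}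
    (hB : B.IsRefl) (hW : ∀ x ∈ W, (∀ y ∈ W, B x y = 0) → x = 0) :
    IsCompl W (B.orthogonal W) :=
  (isCompl_orthogonal_iff_disjoint hB).2 <| Submodule.disjoint_def.2 fun x hxW hxW' =>
    hW x hxW fun y hy => hB _ _ (hxW' y hy)

variable {R S M : Type*} [CommRing R] [Field S] [AddCommGroup M] [Algebra R S] [Module R M]
  [Module S M] [IsScalarTower R S M] {B : LinearMap.BilinForm S M}

theorem projectionOnto_mem_dualSubmodule (hB : B.IsRefl) {W : Submodule S M}
    (h : IsCompl W (B.orthogonal W)) {N : Submodule R M} (hNW : (N : Set M) ⊆ W) {x : M}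
    (hx : x ∈ B.dualSubmodule N) : (W.projectionOnto _ h x : M) ∈ B.dualSubmodule N := by
  intro y hy
  have horth : B ((B.orthogonal W).projectionOnto W h.symm x) y = 0 :=
    hB _ _ (((B.orthogonal W).projectionOnto W h.symm x).2 y (hNW hy))
  have hsplit := congrArg (B · y) (Submodule.projection_add_projection_eq_self h x)
  simp only [Submodule.projection_apply, map_add, LinearMap.add_apply, horth, add_zero] at hsplit
  exact hsplit ▸ hx y hy

end LinearMap.BilinForm

theorem stmt13_general (V : Type*) [AddCommGroup V] [Module ℚ V] [FiniteDimensional ℚ V]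
    (B : LinearMap.BilinForm ℚ V)
    (hsymm : ∀ x y, B x y = B y x)
    (Λ : Submodule ℤ V)
    (hint : Λ ≤ B.dualSubmodule Λ)
    -- M is a primitive sublattice of Λ
    (M : Submodule ℤ V) (hMΛ : M ≤ Λ)
    -- M and M^⊥ are nondegenerate
    (hMnondeg : ∀ x ∈ Submodule.span ℚ (M : Set V),
      (∀ y ∈ Submodule.span ℚ (M : Set V), B x y = 0) → x = 0)
    -- G acts on M (and its rational span W) by isometries
    (G : Type*) [Group G]
    (W : Submodule ℚ V) (hW : W = Submodule.span ℚ (M : Set V))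
    (ρ : G →* (W ≃ₗ[ℚ] W))
    (hisom : ∀ g, ∀ x y : W, B (ρ g x : V) (ρ g y : V) = B (x : V) (y : V))
    -- the induced action of G on the discriminant group A_M is trivial
    (htriv : ∀ g, ∀ x : W, (x : V) ∈ B.dualSubmodule M → (ρ g x : V) - (x : V) ∈ M) :
    ∃ τ : G →* (V ≃ₗ[ℚ] V),
      (∀ g, ∀ x y : V, B (τ g x) (τ g y) = B x y) ∧
      (∀ g, ∀ x ∈ Λ, τ g x ∈ Λ) ∧
      (∀ g, ∀ x : W, τ g (x : V) = (ρ g x : V)) ∧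
      (∀ g, ∀ y ∈ B.orthogonal W, τ g y = y) := by
  have hB : B.IsRefl := fun x y hxy => (hsymm y x).trans hxy
  rw [← hW] at hMnondeg
  have hcompl := LinearMap.BilinForm.isCompl_orthogonal_of_forall_apply_eq_zero hB hMnondeg
  have hMW : (M : Set V) ⊆ W := hW ▸ Submodule.subset_span
  refine ⟨(LinearEquiv.extendByIdOfIsCompl hcompl).comp ρ,
    fun g => LinearMap.BilinForm.extendByIdOfIsCompl_isometry hB hcompl (ρ g) (hisom g),
    fun g x hx => ?_,
    fun g x => LinearEquiv.extendByIdOfIsCompl_apply_left hcompl (ρ g) x,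
    fun g y hy => LinearEquiv.extendByIdOfIsCompl_apply_right hcompl (ρ g) ⟨y, hy⟩⟩
  have hxM : x ∈ B.dualSubmodule M := fun m hm => hint hx m (hMΛ hm)
  have hdiff := htriv g _ (LinearMap.BilinForm.projectionOnto_mem_dualSubmodule hB hcompl hMW hxM)
  rw [← LinearEquiv.extendByIdOfIsCompl_apply_sub_self hcompl] at hdiff
  simpa using Λ.add_mem hx (hMΛ hdiff)

/-- **Nikulin.** Let `Λ` be an even unimodular lattice, `M ⊆ Λ` a primitive
nondegenerate sublattice with nondegenerate orthogonal complement, and `G` a finite group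
acting on `M` by isometries such that the induced action on the discriminant group `A_M` is
trivial (for every `x` in the dual lattice of `M`, `g·x − x ∈ M`).  Then the action of `G`
extends to an action on `Λ` by isometries restricting to the identity on `M^⊥`. -/
theorem stmt13 (V : Type*) [AddCommGroup V] [Module ℚ V] [FiniteDimensional ℚ V]
    (B : LinearMap.BilinForm ℚ V)
    (hsymm : ∀ x y, B x y = B y x)
    (hnondeg : ∀ x : V, (∀ y, B x y = 0) → x = 0)
    (Λ : Submodule ℤ V) (hfg : Λ.FG)
    (hfull : Submodule.span ℚ (Λ : Set V) = ⊤)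
    (hint : Λ ≤ B.dualSubmodule Λ)
    (huni : B.dualSubmodule Λ = Λ)
    (heven : ∀ x ∈ Λ, ∃ k : ℤ, B x x = 2 * k)
    -- M is a primitive sublattice of Λ
    (M : Submodule ℤ V) (hMΛ : M ≤ Λ)
    (hprim : ∀ x ∈ Λ, ∀ m : ℤ, m ≠ 0 → m • x ∈ M → x ∈ M)
    -- M and M^⊥ are nondegenerate
    (hMnondeg : ∀ x ∈ Submodule.span ℚ (M : Set V),
      (∀ y ∈ Submodule.span ℚ (M : Set V), B x y = 0) → x = 0)
    (hMperpnondeg : ∀ x ∈ B.orthogonal (Submodule.span ℚ (M : Set V)),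
      (∀ y ∈ B.orthogonal (Submodule.span ℚ (M : Set V)), B x y = 0) → x = 0)
    -- G acts on M (and its rational span W) by isometries
    (G : Type*) [Group G] [Finite G]
    (W : Submodule ℚ V) (hW : W = Submodule.span ℚ (M : Set V))
    (ρ : G →* (W ≃ₗ[ℚ] W))
    (hisom : ∀ g, ∀ x y : W, B (ρ g x : V) (ρ g y : V) = B (x : V) (y : V))
    (hM : ∀ g, ∀ x : W, (x : V) ∈ M → (ρ g x : V) ∈ M)
    -- the induced action of G on the discriminant group A_M is trivial
    (htriv : ∀ g, ∀ x : W, (x : V) ∈ B.dualSubmodule M → (ρ g x : V) - (x : V) ∈ M) :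
    ∃ τ : G →* (V ≃ₗ[ℚ] V),
      (∀ g, ∀ x y : V, B (τ g x) (τ g y) = B x y) ∧
      (∀ g, ∀ x ∈ Λ, τ g x ∈ Λ) ∧
      (∀ g, ∀ x : W, τ g (x : V) = (ρ g x : V)) ∧
      (∀ g, ∀ y ∈ B.orthogonal W, τ g y = y) :=
  stmt13_general V B hsymm Λ hint M hMΛ hMnondeg G W hW ρ hisom htriv
end
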